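/- arXiv:2202.12101 — 5 statements merged into one kernel-verified Lean document; each statement's English description precedes it below -/
import Mathlib

section
/- Let d₁ ≥ 1 be an integer, s > 0, R > 0, μ > 0 and λ ∈ ℝ. Let v : [0,R] → ℝ be twice continuously differentiable with v'(0) = 0, v(R) = 0, ∫₀^R v(r)² r^{d₁-1} dr = 1, and satisfying −v''(r) − ((d₁−1)/r) v'(r) + μ r^{2s} v(r) = λ v(r) for all r ∈ (0,R). Then ∫₀^R v'(r)² r^{d₁-1} dr − (R^{d₁}/2) v'(R)² = s μ ∫₀^R r^{2s+d₁-1} v(r)² dr. -/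
open MeasureTheory Set Filter intervalIntegral

/-!
Pohozaev's argument: multiplied by `r^d v' + (d/2) r^{d-1} v`, the equation
`-v'' - ((d-1)/r) v' + (μ r^{2s} - λ) v = 0` says exactly that `pohozaevFlux` has derivative
`r^{d-1} v'² - s μ r^{2s+d-1} v²`. Integrating over `[0, R]`, the flux vanishes at `0` because
`v'(0) = 0`, and equals `(R^d / 2) v'(R)²` at `R` because `v(R) = 0`.
-/

noncomputable def pohozaevFlux (d s μ lam : ℝ) (v v' : ℝ → ℝ) (r : ℝ) : ℝ :=
  d / 2 * r ^ (d - 1) * v r * v' r + r ^ d / 2 * (v' r ^ 2 + (lam - μ * r ^ (2 * s)) * v r ^ 2)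

section Pohozaev

variable {d s μ lam : ℝ} {v v' v'' : ℝ → ℝ}

theorem hasDerivAt_pohozaevFlux {r : ℝ} (hr : 0 < r) (hv : HasDerivAt v (v' r) r)
    (hv' : HasDerivAt v' (v'' r) r)
    (hode : -v'' r - (d - 1) / r * v' r + μ * r ^ (2 * s) * v r = lam * v r) :
    HasDerivAt (pohozaevFlux d s μ lam v v')
      (v' r ^ 2 * r ^ (d - 1) - s * μ * (r ^ (2 * s + d - 1) * v r ^ 2)) r := by
  have hr0 : r ≠ 0 := hr.ne'
  have hpow (p : ℝ) : HasDerivAt (fun x : ℝ => x ^ p) (p * r ^ (p - 1)) r :=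
    Real.hasDerivAt_rpow_const (Or.inl hr0)
  have hflux := (((hpow (d - 1)).const_mul (d / 2)).fun_mul hv).fun_mul hv' |>.fun_add
    (((hpow d).div_const 2).fun_mul ((hv'.fun_pow 2).fun_add
      (((hpow (2 * s)).const_mul μ).const_sub lam |>.fun_mul (hv.fun_pow 2))))
  refine hflux.congr_deriv ?_
  have hv''r : v'' r = (μ * r ^ (2 * s) - lam) * v r - (d - 1) / r * v' r := by
    linear_combination -hode
  rw [hv''r, Real.rpow_sub_one hr0 d, Real.rpow_sub_one hr0 (d - 1),
    Real.rpow_sub_one hr0 (2 * s), add_sub_assoc, Real.rpow_add hr, Real.rpow_sub_one hr0 d]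
  field_simp
  ring

theorem continuousOn_pohozaevFlux {t : Set ℝ} (hd : 1 ≤ d) (hs : 0 ≤ s)
    (hv : ContinuousOn v t) (hv' : ContinuousOn v' t) :
    ContinuousOn (pohozaevFlux d s μ lam v v') t := by
  have hpow {p : ℝ} (hp : 0 ≤ p) : ContinuousOn (fun x : ℝ => x ^ p) t :=
    (Real.continuous_rpow_const hp).continuousOn
  unfold pohozaevFlux
  exact ((continuousOn_const.mul (hpow (by linarith))).mul hv).mul hv' |>.add
    (((hpow (by linarith)).div_const 2).mul ((hv'.pow 2).add
      ((continuousOn_const.sub (continuousOn_const.mul (hpow (by linarith)))).mul (hv.pow 2))))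

theorem pohozaevFlux_zero (hd : 0 < d) (hv'0 : v' 0 = 0) : pohozaevFlux d s μ lam v v' 0 = 0 := by
  simp [pohozaevFlux, hv'0, Real.zero_rpow hd.ne']

theorem pohozaevFlux_of_eq_zero {R : ℝ} (hvR : v R = 0) :
    pohozaevFlux d s μ lam v v' R = R ^ d / 2 * v' R ^ 2 := by
  simp [pohozaevFlux, hvR]

theorem integral_pohozaev {R : ℝ} (hd : 1 ≤ d) (hs : 0 ≤ s) (hR : 0 ≤ R)
    (hv : ContinuousOn v (Icc 0 R)) (hv' : ContinuousOn v' (Icc 0 R))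
    (hderiv : ∀ r ∈ Ioo 0 R, HasDerivAt v (v' r) r)
    (hderiv' : ∀ r ∈ Ioo 0 R, HasDerivAt v' (v'' r) r)
    (hode : ∀ r ∈ Ioo 0 R, -v'' r - (d - 1) / r * v' r + μ * r ^ (2 * s) * v r = lam * v r) :
    (∫ r in (0:ℝ)..R, v' r ^ 2 * r ^ (d - 1)) - s * μ * ∫ r in (0:ℝ)..R, r ^ (2 * s + d - 1) * v r ^ 2
      = pohozaevFlux d s μ lam v v' R - pohozaevFlux d s μ lam v v' 0 := by
  have hpow {p : ℝ} (hp : 0 ≤ p) : ContinuousOn (fun x : ℝ => x ^ p) (Icc 0 R) :=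
    (Real.continuous_rpow_const hp).continuousOn
  have hint₁ : IntervalIntegrable (fun r => v' r ^ 2 * r ^ (d - 1)) volume 0 R :=
    ((hv'.pow 2).mul (hpow (by linarith))).intervalIntegrable_of_Icc hR
  have hint₂ : IntervalIntegrable (fun r => r ^ (2 * s + d - 1) * v r ^ 2) volume 0 R :=
    ((hpow (by linarith)).mul (hv.pow 2)).intervalIntegrable_of_Icc hR
  rw [← intervalIntegral.integral_const_mul, ← integral_sub hint₁ (hint₂.const_mul _)]
  exact integral_eq_sub_of_hasDeriv_right_of_le hR (continuousOn_pohozaevFlux hd hs hv hv')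
    (fun r hr => (hasDerivAt_pohozaevFlux hr.1 (hderiv r hr) (hderiv' r hr)
      (hode r hr)).hasDerivWithinAt) (hint₁.sub (hint₂.const_mul _))

end Pohozaev

theorem radial_schrodinger_pohozaev_identity_general (d₁ : ℕ) (hd₁ : 1 ≤ d₁)
    (s R μ lam : ℝ) (hs : 0 < s) (hR : 0 < R)
    (v v' v'' : ℝ → ℝ)
    (hderiv₁ : ∀ r ∈ Set.Icc 0 R, HasDerivWithinAt v (v' r) (Set.Icc 0 R) r)
    (hderiv₂ : ∀ r ∈ Set.Icc 0 R, HasDerivWithinAt v' (v'' r) (Set.Icc 0 R) r)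
    (hv'0 : v' 0 = 0) (hvR : v R = 0)
    (hode : ∀ r ∈ Set.Ioo 0 R,
      -(v'' r) - (((d₁ : ℝ) - 1) / r) * v' r + μ * r ^ (2 * s) * v r = lam * v r) :
    (∫ r in (0:ℝ)..R, (v' r) ^ 2 * r ^ (d₁ - 1)) - R ^ d₁ / 2 * (v' R) ^ 2 =
      s * μ * ∫ r in (0:ℝ)..R, r ^ (2 * s + (d₁ : ℝ) - 1) * (v r) ^ 2 := by
  have hpow_cast (r : ℝ) : r ^ (d₁ - 1) = r ^ ((d₁ : ℝ) - 1) := by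
    rw [← Real.rpow_natCast, Nat.cast_sub hd₁, Nat.cast_one]
  have hnhds {r : ℝ} (hr : r ∈ Ioo 0 R) : Icc 0 R ∈ nhds r := Icc_mem_nhds hr.1 hr.2
  have key := integral_pohozaev (by exact_mod_cast hd₁) hs.le hR.le
    (fun r hr => (hderiv₁ r hr).continuousWithinAt)
    (fun r hr => (hderiv₂ r hr).continuousWithinAt)
    (fun r hr => (hderiv₁ r (Ioo_subset_Icc_self hr)).hasDerivAt (hnhds hr))
    (fun r hr => (hderiv₂ r (Ioo_subset_Icc_self hr)).hasDerivAt (hnhds hr)) hode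
  rw [pohozaevFlux_of_eq_zero hvR, pohozaevFlux_zero (Nat.cast_pos.mpr hd₁) hv'0,
    Real.rpow_natCast] at key
  simp_rw [hpow_cast]
  linarith

/-- for a `C²` normalized radial Dirichlet eigenfunction `v` of the
Schrödinger operator `-Δ + μ r^{2s}` on the ball of radius `R` in `ℝ^{d₁}`,
`∫₀^R v'(r)² r^{d₁-1} dr − (R^{d₁}/2) v'(R)² = s μ ∫₀^R r^{2s+d₁-1} v(r)² dr`. -/
theorem radial_schrodinger_pohozaev_identity (d₁ : ℕ) (hd₁ : 1 ≤ d₁)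
    (s R μ lam : ℝ) (hs : 0 < s) (hR : 0 < R) (hμ : 0 < μ)
    (v v' v'' : ℝ → ℝ)
    (hderiv₁ : ∀ r ∈ Set.Icc 0 R, HasDerivWithinAt v (v' r) (Set.Icc 0 R) r)
    (hderiv₂ : ∀ r ∈ Set.Icc 0 R, HasDerivWithinAt v' (v'' r) (Set.Icc 0 R) r)
    (hcont : ContinuousOn v'' (Set.Icc 0 R))
    (hv'0 : v' 0 = 0) (hvR : v R = 0)
    (hnorm : ∫ r in (0:ℝ)..R, (v r) ^ 2 * r ^ (d₁ - 1) = 1)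
    (hode : ∀ r ∈ Set.Ioo 0 R,
      -(v'' r) - (((d₁ : ℝ) - 1) / r) * v' r + μ * r ^ (2 * s) * v r = lam * v r) :
    (∫ r in (0:ℝ)..R, (v' r) ^ 2 * r ^ (d₁ - 1)) - R ^ d₁ / 2 * (v' R) ^ 2 =
      s * μ * ∫ r in (0:ℝ)..R, r ^ (2 * s + (d₁ : ℝ) - 1) * (v r) ^ 2 :=
  radial_schrodinger_pohozaev_identity_general d₁ hd₁ s R μ lam hs hR v v' v'' hderiv₁ hderiv₂ hv'0
    hvR hode
end

section
/- Let d₁ ≥ 1 be an integer, s > 0 and R > 0. Let E : (0,∞) → ℝ be differentiable and v : (0,∞) × [0,R] → ℝ be such that v, ∂_r v, ∂²_{rr} v, ∂_μ v and ∂²_{μr} v exist and are continuous, and for every μ > 0: v(μ,R) = 0, ∂_r v(μ,0) = 0, ∫₀^R v(μ,r)² r^{d₁-1} dr = 1, and −∂²_{rr} v(μ,r) − ((d₁−1)/r) ∂_r v(μ,r) + μ r^{2s} v(μ,r) = E(μ) v(μ,r) for all r ∈ (0,R). Then for every μ > 0, E(μ) − (R^{d₁}/2) (∂_r v(μ,R))²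 = μ(1+s) E'(μ). -/
/-!
Green's identity for the eigenfunctions at `μ` and `n` gives
`(n - μ) ⟨r^(2s) v_μ, v_n⟩ = (E n - E μ) ⟨v_μ, v_n⟩` in `L²((0,R), r^(d₁-1) dr)`; letting `n → μ`
yields the Hellmann–Feynman formula `E' μ = ⟨r^(2s) v_μ, v_μ⟩`. The Pohozaev identity, which integrates the derivative of a virial
functional, gives `E μ - μ (1 + s) ⟨r^(2s) v_μ, v_μ⟩ = R^d₁ (∂_r v(μ,R))² / 2`.
-/

open MeasureTheory Set Filter intervalIntegral Topology

theorem continuousOn_intervalIntegral_of_continuousOn_uncurry {X : Type*} [TopologicalSpace X]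
    [LocallyCompactSpace X] [FirstCountableTopology X] {f : X → ℝ → ℝ} {U : Set X} {a b : ℝ}
    (hU : IsOpen U) (hf : ContinuousOn (Function.uncurry f) (U ×ˢ uIcc a b)) :
    ContinuousOn (fun x => ∫ t in a..b, f x t) U := by
  intro x₀ hx₀
  obtain ⟨K, hK, hKU, hKc⟩ := local_compact_nhds (hU.mem_nhds hx₀)
  obtain ⟨C, hC⟩ := (hKc.prod isCompact_uIcc).exists_bound_of_continuousOn
    (hf.mono (prod_mono hKU subset_rfl))
  have hsec : ∀ x ∈ U, ContinuousOn (f x) (uIcc a b) := fun x hx =>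
    hf.comp (continuousOn_const.prodMk continuousOn_id) fun t ht => ⟨hx, ht⟩
  refine ContinuousAt.continuousWithinAt <| continuousAt_of_dominated_interval (bound := fun _ => C)
    ?_ ?_ intervalIntegrable_const ?_
  · filter_upwards [hK] with x hx
    exact ((hsec x (hKU hx)).mono uIoc_subset_uIcc).aestronglyMeasurable measurableSet_uIoc
  · filter_upwards [hK] with x hx
    exact ae_of_all _ fun t ht => hC (x, t) ⟨hx, uIoc_subset_uIcc ht⟩
  · refine ae_of_all _ fun t ht => ?_
    have ht' : t ∈ uIcc a b := uIoc_subset_uIcc ht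
    have : ContinuousWithinAt (fun x => f x t) U x₀ :=
      (hf (x₀, t) ⟨hx₀, ht'⟩).comp (f := fun x => (x, t))
        (continuous_id.prodMk continuous_const).continuousWithinAt fun x hx => ⟨hx, ht'⟩
    exact this.continuousAt (hU.mem_nhds hx₀)

theorem HasDerivAt.mul_eq_of_sub_mul_eq {E G H : ℝ → ℝ} {μ E' : ℝ} (hE : HasDerivAt E E' μ)
    (hG : ContinuousAt G μ) (hH : ContinuousAt H μ)
    (h : ∀ᶠ n in 𝓝 μ, (n - μ) * H n = (E n - E μ) * G n) : E' * G μ = H μ := by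
  have hlim : Tendsto (fun n => slope E μ n * G n) (𝓝[≠] μ) (𝓝 (E' * G μ)) :=
    (hasDerivAt_iff_tendsto_slope.mp hE).mul (hG.tendsto.mono_left nhdsWithin_le_nhds)
  have hslope : ∀ᶠ n in 𝓝[≠] μ, slope E μ n * G n = H n := by
    filter_upwards [self_mem_nhdsWithin, nhdsWithin_le_nhds h] with n hn hn'
    rw [slope_def_field, div_mul_eq_mul_div, div_eq_iff (sub_ne_zero.mpr hn), ← hn', mul_comm]
  exact tendsto_nhds_unique (hlim.congr' hslope) (hH.tendsto.mono_left nhdsWithin_le_nhds)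

theorem hasDerivAt_pow_pred {d : ℕ} (hd : 1 ≤ d) {r : ℝ} (hr : r ≠ 0) :
    HasDerivAt (fun r : ℝ => r ^ (d - 1)) (((d : ℝ) - 1) / r * r ^ (d - 1)) r := by
  obtain ⟨k, rfl⟩ := Nat.exists_eq_add_of_le' hd
  simp only [Nat.add_sub_cancel]
  refine (hasDerivAt_pow k r).congr_deriv ?_
  rcases k with _ | k
  · simp
  · push_cast
    field_simp
    ring

noncomputable def radialInner (d : ℕ) (R : ℝ) (u w : ℝ → ℝ) : ℝ :=
  ∫ r in (0 : ℝ)..R, u r * w r * r ^ (d - 1)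

theorem intervalIntegrable_radial_integrand {d : ℕ} {R : ℝ} (hR : 0 ≤ R) {f g : ℝ → ℝ}
    (hf : ContinuousOn f (Icc 0 R)) (hg : ContinuousOn g (Icc 0 R)) :
    IntervalIntegrable (fun r => f r * g r * r ^ (d - 1)) volume 0 R :=
  ((hf.mul hg).mul (continuous_pow _).continuousOn).intervalIntegrable_of_Icc hR

theorem continuousOn_radialInner {d : ℕ} {R : ℝ} {U : Set ℝ} {g : ℝ → ℝ} {v : ℝ → ℝ → ℝ}
    (hU : IsOpen U) (hR : 0 ≤ R) (hg : ContinuousOn g (Icc 0 R))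
    (hv : ContinuousOn (Function.uncurry v) (U ×ˢ Icc 0 R)) :
    ContinuousOn (fun n => radialInner d R g (v n)) U := by
  refine continuousOn_intervalIntegral_of_continuousOn_uncurry hU ?_
  rw [uIcc_of_le hR]
  exact ((hg.comp continuousOn_snd fun p hp => hp.2).mul hv).mul
    ((continuous_pow _).comp continuous_snd).continuousOn

/-- `u` is a radial Dirichlet eigenfunction of `-Δ + μ V` on the ball of radius `R` in `ℝ^d`,
with eigenvalue `E` and radial derivatives `u'`, `u''`. -/
structure IsRadialEigenfunction (d : ℕ) (R : ℝ) (V : ℝ → ℝ) (μ E : ℝ) (u u' u'' : ℝ → ℝ) :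
    Prop where
  hasDerivWithinAt : ∀ r ∈ Icc 0 R, HasDerivWithinAt u (u' r) (Icc 0 R) r
  hasDerivWithinAt_deriv : ∀ r ∈ Icc 0 R, HasDerivWithinAt u' (u'' r) (Icc 0 R) r
  eq : ∀ r ∈ Ioo 0 R, -u'' r - ((d : ℝ) - 1) / r * u' r + μ * V r * u r = E * u r
  apply_right : u R = 0
  deriv_apply_zero : u' 0 = 0

namespace IsRadialEigenfunction

variable {d : ℕ} {R μ E : ℝ} {V u u' u'' : ℝ → ℝ}

theorem continuousOn (hu : IsRadialEigenfunction d R V μ E u u' u'') : ContinuousOn u (Icc 0 R) :=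
  fun r hr => (hu.hasDerivWithinAt r hr).continuousWithinAt

theorem continuousOn_deriv (hu : IsRadialEigenfunction d R V μ E u u' u'') :
    ContinuousOn u' (Icc 0 R) :=
  fun r hr => (hu.hasDerivWithinAt_deriv r hr).continuousWithinAt

theorem hasDerivAt (hu : IsRadialEigenfunction d R V μ E u u' u'') {r : ℝ} (hr : r ∈ Ioo 0 R) :
    HasDerivAt u (u' r) r :=
  (hu.hasDerivWithinAt r (Ioo_subset_Icc_self hr)).hasDerivAt (Icc_mem_nhds hr.1 hr.2)

theorem hasDerivAt_deriv (hu : IsRadialEigenfunction d R V μ E u u' u'') {r : ℝ}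
    (hr : r ∈ Ioo 0 R) : HasDerivAt u' (u'' r) r :=
  (hu.hasDerivWithinAt_deriv r (Ioo_subset_Icc_self hr)).hasDerivAt (Icc_mem_nhds hr.1 hr.2)

theorem second_deriv_eq (hu : IsRadialEigenfunction d R V μ E u u' u'') {r : ℝ}
    (hr : r ∈ Ioo 0 R) : u'' r = μ * V r * u r - E * u r - ((d : ℝ) - 1) / r * u' r := by
  linarith [hu.eq r hr]

/-- Green's identity: the Wronskian `r^(d-1) (w' u - u' w)` vanishes at both ends. -/
theorem sub_mul_radialInner_eq {μ₁ μ₂ E₁ E₂ : ℝ} {w w' w'' : ℝ → ℝ} (hd : 1 ≤ d) (hR : 0 ≤ R)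
    (hV : ContinuousOn V (Icc 0 R)) (hu : IsRadialEigenfunction d R V μ₁ E₁ u u' u'')
    (hw : IsRadialEigenfunction d R V μ₂ E₂ w w' w'') :
    (μ₂ - μ₁) * radialInner d R (fun r => V r * u r) w = (E₂ - E₁) * radialInner d R u w := by
  have hVuw := intervalIntegrable_radial_integrand (d := d) (f := fun r => V r * u r) hR
    (hV.mul hu.continuousOn) hw.continuousOn
  have huw := intervalIntegrable_radial_integrand (d := d) hR hu.continuousOn hw.continuousOn
  have hWronskian : ∫ r in (0 : ℝ)..R,
      ((μ₂ - μ₁) * (V r * u r * w r * r ^ (d - 1)) - (E₂ - E₁) * (u r * w r * r ^ (d - 1)))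
        = R ^ (d - 1) * (w' R * u R - u' R * w R) - 0 ^ (d - 1) * (w' 0 * u 0 - u' 0 * w 0) := by
    refine integral_eq_sub_of_hasDerivAt_of_le hR
      ((continuous_pow _).continuousOn.mul ((hw.continuousOn_deriv.mul hu.continuousOn).sub
        (hu.continuousOn_deriv.mul hw.continuousOn)))
      (fun r hr => ?_) ((hVuw.const_mul _).sub (huw.const_mul _))
    refine ((hasDerivAt_pow_pred hd hr.1.ne').mul
      (((hw.hasDerivAt_deriv hr).mul (hu.hasDerivAt hr)).sub
        ((hu.hasDerivAt_deriv hr).mul (hw.hasDerivAt hr)))).congr_deriv ?_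
    simp only [Pi.mul_apply, Pi.sub_apply]
    rw [hu.second_deriv_eq hr, hw.second_deriv_eq hr]
    ring
  rw [integral_sub (hVuw.const_mul _) (huw.const_mul _), intervalIntegral.integral_const_mul,
    intervalIntegral.integral_const_mul, hu.apply_right, hw.apply_right, hu.deriv_apply_zero,
    hw.deriv_apply_zero] at hWronskian
  simp only [mul_zero, zero_mul, sub_self] at hWronskian
  rw [radialInner, radialInner]
  linarith

theorem pohozaev {s : ℝ} (hd : 1 ≤ d) (hs : 0 ≤ s) (hR : 0 ≤ R)
    (hu : IsRadialEigenfunction d R (· ^ (2 * s)) μ E u u' u'') :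
    E * radialInner d R u u - μ * (1 + s) * radialInner d R (fun r => r ^ (2 * s) * u r) u
      = R ^ d * u' R ^ 2 / 2 := by
  have hV : Continuous fun r : ℝ => r ^ (2 * s) := Real.continuous_rpow_const (by positivity)
  have huc := hu.continuousOn
  have hu'c := hu.continuousOn_deriv
  have huu := intervalIntegrable_radial_integrand (d := d) hR huc huc
  have hVuu := intervalIntegrable_radial_integrand (d := d) (f := fun r => r ^ (2 * s) * u r) hR
    (hV.continuousOn.mul huc) huc
  -- `F' = r^(d-1) u² (E - μ (1 + s) r^(2s))` by the eigenvalue equation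
  set F : ℝ → ℝ := fun r => r * r ^ (d - 1) * (u' r * u' r) / 2
    + ((d : ℝ) - 2) / 2 * r ^ (d - 1) * (u r * u' r)
    + E / 2 * (r * r ^ (d - 1)) * (u r * u r)
    - μ / 2 * (r ^ (2 * s) * (r * r ^ (d - 1))) * (u r * u r) with hF
  have hFTC : ∫ r in (0 : ℝ)..R,
      (E * (u r * u r * r ^ (d - 1)) - μ * (1 + s) * (r ^ (2 * s) * u r * u r * r ^ (d - 1)))
        = F R - F 0 := by
    refine integral_eq_sub_of_hasDerivAt_of_le hR (by rw [hF]; fun_prop)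
      (fun r hr => ?_) ((huu.const_mul _).sub (hVuu.const_mul _))
    have hr0 : r ≠ 0 := hr.1.ne'
    have hρ := hasDerivAt_pow_pred hd hr0
    have hrρ := (hasDerivAt_id' r).mul hρ
    have hrpow := Real.hasDerivAt_rpow_const (p := 2 * s) (Or.inl hr0)
    have hdu := hu.hasDerivAt hr
    have hdu' := hu.hasDerivAt_deriv hr
    refine ((((hrρ.mul (hdu'.mul hdu')).div_const 2).add
      ((hρ.const_mul (((d : ℝ) - 2) / 2)).mul (hdu.mul hdu'))).add
      ((hrρ.const_mul (E / 2)).mul (hdu.mul hdu))).sub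
      (((hrpow.mul hrρ).const_mul (μ / 2)).mul (hdu.mul hdu)) |>.congr_deriv ?_
    simp only [Pi.mul_apply]
    rw [hu.second_deriv_eq hr, Real.rpow_sub_one hr0]
    field_simp
    ring
  have hFR : F R = R ^ d * u' R ^ 2 / 2 := by
    obtain ⟨k, rfl⟩ := Nat.exists_eq_add_of_le' hd
    simp only [hF, hu.apply_right, Nat.add_sub_cancel, pow_succ]
    ring
  have hF0 : F 0 = 0 := by simp [hF, hu.deriv_apply_zero]
  rw [integral_sub (huu.const_mul _) (hVuu.const_mul _), intervalIntegral.integral_const_mul,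
    intervalIntegral.integral_const_mul, hFR, hF0, sub_zero] at hFTC
  simpa only [radialInner, mul_assoc] using hFTC

end IsRadialEigenfunction

theorem radial_schrodinger_mu_identity_general (d₁ : ℕ) (hd₁ : 1 ≤ d₁) (s R : ℝ) (hs : 0 < s) (hR : 0 < R)
    (E E' : ℝ → ℝ) (v vr vrr : ℝ → ℝ → ℝ)
    (hE : ∀ μ > (0:ℝ), HasDerivAt E (E' μ) μ)
    (hvr : ∀ μ > (0:ℝ), ∀ r ∈ Set.Icc 0 R, HasDerivWithinAt (v μ) (vr μ r) (Set.Icc 0 R) r)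
    (hvrr : ∀ μ > (0:ℝ), ∀ r ∈ Set.Icc 0 R, HasDerivWithinAt (vr μ) (vrr μ r) (Set.Icc 0 R) r)
    (hcv : ContinuousOn (fun p : ℝ × ℝ => v p.1 p.2) (Set.Ioi 0 ×ˢ Set.Icc 0 R))
    (hbcR : ∀ μ > (0:ℝ), v μ R = 0)
    (hbc0 : ∀ μ > (0:ℝ), vr μ 0 = 0)
    (hnorm : ∀ μ > (0:ℝ), ∫ r in (0:ℝ)..R, (v μ r) ^ 2 * r ^ (d₁ - 1) = 1)
    (hode : ∀ μ > (0:ℝ), ∀ r ∈ Set.Ioo 0 R,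
      -(vrr μ r) - (((d₁ : ℝ) - 1) / r) * vr μ r + μ * r ^ (2 * s) * v μ r = E μ * v μ r) :
    ∀ μ > (0:ℝ), E μ - R ^ d₁ / 2 * (vr μ R) ^ 2 = μ * (1 + s) * E' μ := by
  intro μ hμ
  have hv : ∀ m > (0:ℝ), IsRadialEigenfunction d₁ R (· ^ (2 * s)) m (E m) (v m) (vr m) (vrr m) :=
    fun m hm => ⟨hvr m hm, hvrr m hm, hode m hm, hbcR m hm, hbc0 m hm⟩
  have hV : ContinuousOn (fun r : ℝ => r ^ (2 * s)) (Icc 0 R) :=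
    (Real.continuous_rpow_const (by positivity)).continuousOn
  have hcont : ∀ g : ℝ → ℝ, ContinuousOn g (Icc 0 R) →
      ContinuousAt (fun n => radialInner d₁ R g (v n)) μ := fun g hg =>
    (continuousOn_radialInner isOpen_Ioi hR.le hg hcv).continuousAt (Ioi_mem_nhds hμ)
  have hnormμ : radialInner d₁ R (v μ) (v μ) = 1 := by
    simpa only [radialInner, sq] using hnorm μ hμ
  have hHellmannFeynman : E' μ = radialInner d₁ R (fun r => r ^ (2 * s) * v μ r) (v μ) := by
    have h := (hE μ hμ).mul_eq_of_sub_mul_eq (hcont _ (hv μ hμ).continuousOn)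
      (hcont _ (hV.mul (hv μ hμ).continuousOn)) <| by
        filter_upwards [Ioi_mem_nhds hμ] with n hn
        exact (hv μ hμ).sub_mul_radialInner_eq hd₁ hR.le hV (hv n hn)
    rwa [hnormμ, mul_one] at h
  have hPohozaev := (hv μ hμ).pohozaev hd₁ hs.le hR.le
  rw [hnormμ, ← hHellmannFeynman] at hPohozaev
  linarith

/-- for a family `v(μ,·)` of normalized radial Dirichlet
eigenfunctions of `-Δ + μ r^{2s}` on the ball of radius `R` in `ℝ^{d₁}` with eigenvalue
`E(μ)`, differentiable in `μ`, one has `E(μ) − (R^{d₁}/2) (∂_r v(μ,R))² = μ(1+s) E'(μ)`. -/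
theorem radial_schrodinger_mu_identity (d₁ : ℕ) (hd₁ : 1 ≤ d₁) (s R : ℝ) (hs : 0 < s) (hR : 0 < R)
    (E E' : ℝ → ℝ) (v vr vrr vμ vμr : ℝ → ℝ → ℝ)
    (hE : ∀ μ > (0:ℝ), HasDerivAt E (E' μ) μ)
    (hvr : ∀ μ > (0:ℝ), ∀ r ∈ Set.Icc 0 R, HasDerivWithinAt (v μ) (vr μ r) (Set.Icc 0 R) r)
    (hvrr : ∀ μ > (0:ℝ), ∀ r ∈ Set.Icc 0 R, HasDerivWithinAt (vr μ) (vrr μ r) (Set.Icc 0 R) r)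
    (hvμ : ∀ μ > (0:ℝ), ∀ r ∈ Set.Icc 0 R, HasDerivAt (fun m => v m r) (vμ μ r) μ)
    (hvμr : ∀ μ > (0:ℝ), ∀ r ∈ Set.Icc 0 R, HasDerivAt (fun m => vr m r) (vμr μ r) μ)
    (hcv : ContinuousOn (fun p : ℝ × ℝ => v p.1 p.2) (Set.Ioi 0 ×ˢ Set.Icc 0 R))
    (hcvr : ContinuousOn (fun p : ℝ × ℝ => vr p.1 p.2) (Set.Ioi 0 ×ˢ Set.Icc 0 R))
    (hcvrr : ContinuousOn (fun p : ℝ × ℝ => vrr p.1 p.2) (Set.Ioi 0 ×ˢ Set.Icc 0 R))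
    (hcvμ : ContinuousOn (fun p : ℝ × ℝ => vμ p.1 p.2) (Set.Ioi 0 ×ˢ Set.Icc 0 R))
    (hcvμr : ContinuousOn (fun p : ℝ × ℝ => vμr p.1 p.2) (Set.Ioi 0 ×ˢ Set.Icc 0 R))
    (hbcR : ∀ μ > (0:ℝ), v μ R = 0)
    (hbc0 : ∀ μ > (0:ℝ), vr μ 0 = 0)
    (hnorm : ∀ μ > (0:ℝ), ∫ r in (0:ℝ)..R, (v μ r) ^ 2 * r ^ (d₁ - 1) = 1)
    (hode : ∀ μ > (0:ℝ), ∀ r ∈ Set.Ioo 0 R,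
      -(vrr μ r) - (((d₁ : ℝ) - 1) / r) * vr μ r + μ * r ^ (2 * s) * v μ r = E μ * v μ r) :
    ∀ μ > (0:ℝ), E μ - R ^ d₁ / 2 * (vr μ R) ^ 2 = μ * (1 + s) * E' μ :=
  radial_schrodinger_mu_identity_general d₁ hd₁ s R hs hR E E' v vr vrr hE hvr hvrr hcv hbcR hbc0
    hnorm hode
end

section
/- Let s > 0, R > 0 and let w : [0,R] → ℝ be continuous with w(r) > 0 for all r ∈ (0,R) and ∫₀^R w(t) dt = 1. Set c := ∫₀^R t^{2s} w(t) dt. Then for every r ∈ (0,R), ∫₀^r (t^{2s} − c) w(t) dt < 0. -/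
open MeasureTheory Set Filter intervalIntegral

/-- if `w` is continuous on `[0,R]`, positive on `(0,R)`, with
`∫₀^R w = 1`, and `c = ∫₀^R t^{2s} w(t) dt`, then `∫₀^r (t^{2s} − c) w(t) dt < 0`
for every `r ∈ (0,R)`. -/
theorem moment_weight_partial_integral_neg (s R : ℝ) (hs : 0 < s) (hR : 0 < R)
    (w : ℝ → ℝ) (hw : ContinuousOn w (Set.Icc 0 R))
    (hpos : ∀ t ∈ Set.Ioo 0 R, 0 < w t)
    (hint : ∫ t in (0:ℝ)..R, w t = 1) :
    ∀ r ∈ Set.Ioo 0 R,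
      (∫ t in (0:ℝ)..r,
        (t ^ (2 * s) - ∫ t' in (0:ℝ)..R, t' ^ (2 * s) * w t') * w t) < 0 := by
  intro r hr
  obtain ⟨hr0, hrR⟩ := hr
  set c := ∫ t' in (0:ℝ)..R, t' ^ (2 * s) * w t' with hc
  have h2s : (0:ℝ) < 2 * s := by linarith
  have hrpow : ContinuousOn (fun t : ℝ => t ^ (2 * s)) (Set.Icc 0 R) := by
    intro x _
    exact (Real.continuousAt_rpow_const x _ (Or.inr h2s.le)).continuousWithinAt
  have hcont : ContinuousOn (fun t => (t ^ (2 * s) - c) * w t) (Set.Icc 0 R) :=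
    (hrpow.sub continuousOn_const).mul hw
  have hcont2 : ContinuousOn (fun t => t ^ (2 * s) * w t) (Set.Icc 0 R) := hrpow.mul hw
  have hsub1 : Set.uIcc (0:ℝ) r ⊆ Set.Icc 0 R := by
    rw [Set.uIcc_of_le hr0.le]
    exact Set.Icc_subset_Icc le_rfl hrR.le
  have hsub2 : Set.uIcc r R ⊆ Set.Icc 0 R := by
    rw [Set.uIcc_of_le hrR.le]
    exact Set.Icc_subset_Icc hr0.le le_rfl
  have hsub3 : Set.uIcc (0:ℝ) R ⊆ Set.Icc 0 R := by
    rw [Set.uIcc_of_le hR.le]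
  have hI1 : IntervalIntegrable (fun t => (t ^ (2 * s) - c) * w t) volume 0 r :=
    (hcont.mono hsub1).intervalIntegrable
  have hI2 : IntervalIntegrable (fun t => (t ^ (2 * s) - c) * w t) volume r R :=
    (hcont.mono hsub2).intervalIntegrable
  have htot : (∫ t in (0:ℝ)..R, (t ^ (2 * s) - c) * w t) = 0 := by
    have heq : ∀ t : ℝ, (t ^ (2 * s) - c) * w t = t ^ (2 * s) * w t - c * w t := by
      intro t; ring
    simp_rw [heq]
    rw [intervalIntegral.integral_sub (hcont2.mono hsub3).intervalIntegrable
      (((hw.mono hsub3).intervalIntegrable).const_mul c),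
      intervalIntegral.integral_const_mul, hint, ← hc]
    ring
  rcases le_or_gt (r ^ (2 * s)) c with h1 | h1
  · have hneg : (0:ℝ) < ∫ t in (0:ℝ)..r, -((t ^ (2 * s) - c) * w t) := by
      apply intervalIntegral_pos_of_pos_on hI1.neg _ hr0
      intro x hx
      simp only [Pi.neg_apply]
      have hx1 : x ^ (2 * s) < c :=
        lt_of_lt_of_le (Real.rpow_lt_rpow hx.1.le hx.2 h2s) h1
      have hwx : 0 < w x := hpos x ⟨hx.1, hx.2.trans hrR⟩
      nlinarith
    rw [intervalIntegral.integral_neg] at hneg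
    linarith
  · have hadd : (∫ t in (0:ℝ)..r, (t ^ (2 * s) - c) * w t)
        + (∫ t in r..R, (t ^ (2 * s) - c) * w t)
        = ∫ t in (0:ℝ)..R, (t ^ (2 * s) - c) * w t :=
      intervalIntegral.integral_add_adjacent_intervals hI1 hI2
    have hpos' : 0 < ∫ t in r..R, (t ^ (2 * s) - c) * w t := by
      apply intervalIntegral_pos_of_pos_on hI2 _ hrR
      intro x hx
      have hx1 : c < x ^ (2 * s) :=
        h1.trans (Real.rpow_lt_rpow hr0.le hx.1 h2s)
      have hwx : 0 < w x := hpos x ⟨hr0.trans hx.1, hx.2⟩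
      nlinarith
    linarith
end

section
/- Let d₁ ≥ 1 be an integer, s > 0 and R > 0. Let E : (0,∞) → ℝ be twice differentiable and v : (0,∞) × [0,R] → ℝ be such that v, ∂_r v, ∂²_{rr} v, ∂_μ v, ∂²_{μr} v, ∂²_{μμ} v and ∂³_{μμr} v exist and are continuous, and for every μ > 0: v(μ,r) > 0 for r ∈ (0,R), v(μ,R) = 0, ∂_r v(μ,0) = 0, ∫₀^R v(μ,r)² r^{d₁-1} dr = 1, and −∂²_{rr} v(μ,r) − ((d₁−1)/r) ∂_r v(μ,r) + μ r^{2s} v(μ,r) = E(μ) v(μ,r) for all r ∈ (0,R). Then for every μ > 0, s E'(μ) + μ(1+s) E''(μ) ≥ 0. -/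
/-!
Differentiating the eigenvalue equation in `μ`, and applying the dilation `D = 2 r ∂ᵣ + d₁` to it,
shows that `W = 4 (1 + s) μ ∂_μ v - D v` solves the radial equation of `v` with source `κ v` for a
constant `κ`: the `r^{2s} v` terms cancel. With `n = d₁ - 1`, the Wronskian of `v` and `W` is then
`κ ∫₀ʳ v² ρⁿ`; it vanishes at `0` and is `≥ 0` at `R`, so `κ ≥ 0` and `W / v` is nondecreasing.
Hence `v W` changes sign once and `∫ (r^{2s} - c) v W rⁿ ≥ 0` for a suitable `c`. Feynman–Hellmann
(`∫ r^{2s} v² rⁿ = E'`), its `μ`-derivative, `∫ v ∂_μ v rⁿ = 0` and the virial identities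
`∫ rᵖ v (D v) rⁿ = -p ∫ rᵖ v² rⁿ` evaluate this integral as `2 (1 + s) μ E'' + 2 s E'`.
-/

open MeasureTheory Set Filter intervalIntegral Function Topology Interval

theorem ContinuousOn.hasDerivAt_integral_Icc_right {g : ℝ → ℝ} {a b r : ℝ}
    (hg : ContinuousOn g (Icc a b)) (hr : r ∈ Ioo a b) :
    HasDerivAt (fun ρ => ∫ t in a..ρ, g t) (g r) r := by
  have hsub : uIcc a r ⊆ Icc a b := by
    rw [uIcc_of_le hr.1.le]; exact Icc_subset_Icc le_rfl hr.2.le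
  exact integral_hasDerivAt_right ((hg.mono hsub).intervalIntegrable)
    ((hg.mono Ioo_subset_Icc_self).stronglyMeasurableAtFilter isOpen_Ioo r hr)
    (hg.continuousAt (Icc_mem_nhds hr.1 hr.2))

theorem hasDerivAt_integral_of_continuousOn {U : Set ℝ} (hU : IsOpen U) {a b μ : ℝ}
    (hab : a ≤ b) (hμ : μ ∈ U) {F F' : ℝ → ℝ → ℝ}
    (hF : ContinuousOn (uncurry F) (U ×ˢ Icc a b))
    (hF' : ContinuousOn (uncurry F') (U ×ˢ Icc a b))
    (hd : ∀ m ∈ U, ∀ t ∈ Icc a b, HasDerivAt (F · t) (F' m t) m) :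
    HasDerivAt (fun m => ∫ t in a..b, F m t) (∫ t in a..b, F' μ t) μ := by
  obtain ⟨ε, hε, hball⟩ := Metric.nhds_basis_closedBall.mem_iff.1 (hU.mem_nhds hμ)
  obtain ⟨C, hC⟩ := ((isCompact_closedBall μ ε).prod isCompact_Icc).exists_bound_of_continuousOn
    (hF'.mono (prod_mono hball subset_rfl))
  have hIoc : Ι a b ⊆ Icc a b := by rw [uIoc_of_le hab]; exact Ioc_subset_Icc_self
  have hnhds : Metric.ball μ ε ∈ 𝓝 μ := Metric.ball_mem_nhds μ hε
  refine (hasDerivAt_integral_of_dominated_loc_of_deriv_le hnhds ?_ ?_ ?_ ?_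
    (intervalIntegrable_const (c := C)) ?_).2
  · filter_upwards [hU.mem_nhds hμ] with m hm
    exact ((ContinuousOn.uncurry_left _ hm hF).mono hIoc).aestronglyMeasurable measurableSet_uIoc
  · exact ((ContinuousOn.uncurry_left _ hμ hF).mono (uIcc_of_le hab).subset).intervalIntegrable
  · exact ((ContinuousOn.uncurry_left _ hμ hF').mono hIoc).aestronglyMeasurable measurableSet_uIoc
  · exact ae_of_all _ fun t ht m hm =>
      hC (m, t) ⟨Metric.ball_subset_closedBall hm, hIoc ht⟩
  · exact ae_of_all _ fun t ht m hm =>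
      hd m (hball (Metric.ball_subset_closedBall hm)) t (hIoc ht)

theorem integral_eq_of_hasDerivAt_integral {U : Set ℝ} (hU : IsOpen U) {a b μ : ℝ}
    (hab : a ≤ b) (hμ : μ ∈ U) {F F' : ℝ → ℝ → ℝ} {φ : ℝ → ℝ} {φ' : ℝ}
    (hF : ContinuousOn (uncurry F) (U ×ˢ Icc a b))
    (hF' : ContinuousOn (uncurry F') (U ×ˢ Icc a b))
    (hd : ∀ m ∈ U, ∀ t ∈ Icc a b, HasDerivAt (F · t) (F' m t) m)
    (hφ : ∀ m ∈ U, ∫ t in a..b, F m t = φ m) (hφ' : HasDerivAt φ φ' μ) :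
    ∫ t in a..b, F' μ t = φ' :=
  (hasDerivAt_integral_of_continuousOn hU hab hμ hF hF' hd).unique <|
    hφ'.congr_of_eventuallyEq <| eventually_of_mem (hU.mem_nhds hμ) hφ

/-- Symmetry of mixed partial derivatives, obtained by differentiating
`f m ρ = f m a + ∫ t in a..ρ, g m t` in `m`. -/
theorem hasDerivAt_of_hasDerivAt_swap {U : Set ℝ} (hU : IsOpen U) {a b μ r : ℝ}
    (hμ : μ ∈ U) (hr : r ∈ Ioo a b) {f g gₘ : ℝ → ℝ → ℝ} {fₘ : ℝ → ℝ}
    (hf : ∀ m ∈ U, ContinuousOn (f m) (Icc a b))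
    (hfg : ∀ m ∈ U, ∀ t ∈ Ioo a b, HasDerivAt (f m) (g m t) t)
    (hg : ContinuousOn (uncurry g) (U ×ˢ Icc a b))
    (hgₘ : ContinuousOn (uncurry gₘ) (U ×ˢ Icc a b))
    (hg_deriv : ∀ m ∈ U, ∀ t ∈ Icc a b, HasDerivAt (g · t) (gₘ m t) m)
    (hfₘ : ∀ t ∈ Icc a b, HasDerivAt (f · t) (fₘ t) μ) :
    HasDerivAt fₘ (gₘ μ r) r := by
  have hab : a ≤ b := hr.1.le.trans hr.2.le
  have hfₘ_eq : ∀ ρ ∈ Icc a b, fₘ ρ = fₘ a + ∫ t in a..ρ, gₘ μ t := by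
    intro ρ hρ
    have hsub : Icc a ρ ⊆ Icc a b := Icc_subset_Icc le_rfl hρ.2
    have hftc : ∀ m ∈ U, f m ρ = f m a + ∫ t in a..ρ, g m t := fun m hm => by
      rw [integral_eq_sub_of_hasDerivAt_of_le hρ.1 ((hf m hm).mono hsub)
        (fun t ht => hfg m hm t ⟨ht.1, ht.2.trans_le hρ.2⟩)
        (((ContinuousOn.uncurry_left _ hm hg).mono hsub).intervalIntegrable_of_Icc hρ.1)]
      ring
    have hsum := (hfₘ a (left_mem_Icc.2 hab)).add <| hasDerivAt_integral_of_continuousOn hU hρ.1 hμ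
      (hg.mono (prod_mono subset_rfl hsub)) (hgₘ.mono (prod_mono subset_rfl hsub))
      fun m hm t ht => hg_deriv m hm t (hsub ht)
    exact (hfₘ ρ hρ).unique <| hsum.congr_of_eventuallyEq <|
      eventually_of_mem (hU.mem_nhds hμ) hftc
  refine (((ContinuousOn.uncurry_left _ hμ hgₘ).hasDerivAt_integral_Icc_right hr).const_add
    (fₘ a)).congr_of_eventuallyEq ?_
  filter_upwards [Ioo_mem_nhds hr.1 hr.2] with ρ hρ using hfₘ_eq ρ (Ioo_subset_Icc_self hρ)

theorem hasDerivAt_pow_of_ne_zero (n : ℕ) {r : ℝ} (hr : r ≠ 0) :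
    HasDerivAt (fun x : ℝ => x ^ n) (n * r ^ n / r) r := by
  refine (hasDerivAt_pow n r).congr_deriv ?_
  rcases n with _ | n
  · simp
  · rw [Nat.add_sub_cancel, pow_succ]
    field_simp

theorem MonotoneOn.exists_sign_change {f : ℝ → ℝ} {a b : ℝ} (hab : a ≤ b)
    (hf : MonotoneOn f (Ioo a b)) :
    ∃ c ∈ Icc a b, ∀ r ∈ Ioo a b, (r < c → f r ≤ 0) ∧ (c < r → 0 ≤ f r) := by
  set T := {x ∈ Icc a b | ∀ y ∈ Ioo a b, y < x → f y ≤ 0}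
  have haT : a ∈ T := ⟨left_mem_Icc.2 hab, fun y hy hya => absurd hy.1 hya.not_gt⟩
  have hT : BddAbove T := ⟨b, fun x hx => hx.1.2⟩
  refine ⟨sSup T, ⟨le_csSup hT haT, csSup_le ⟨a, haT⟩ fun x hx => hx.1.2⟩, fun r hr => ⟨?_, ?_⟩⟩
  · intro hrc
    obtain ⟨t, htT, hrt⟩ := exists_lt_of_lt_csSup ⟨a, haT⟩ hrc
    exact htT.2 r hr hrt
  · intro hcr
    by_contra! hneg
    have hrT : r ∈ T := ⟨Ioo_subset_Icc_self hr, fun y hy hyr => (hf hy hr hyr.le).trans hneg.le⟩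
    exact hcr.not_ge (le_csSup hT hrT)

/-- `V W` changes sign at most once, from `-` to `+`, so it correlates with every monotone `φ`. -/
theorem exists_sub_mul_nonneg_of_monotoneOn_div {V W φ : ℝ → ℝ} {a b : ℝ} (hab : a ≤ b)
    (hV : ∀ r ∈ Ioo a b, 0 < V r) (hWV : MonotoneOn (fun r => W r / V r) (Ioo a b))
    (hφ : MonotoneOn φ (Icc a b)) :
    ∃ c, ∀ r ∈ Ioo a b, 0 ≤ (φ r - c) * (V r * W r) := by
  obtain ⟨c, hc, hsign⟩ := hWV.exists_sign_change hab
  refine ⟨φ c, fun r hr => ?_⟩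
  have hVW : V r * W r = V r ^ 2 * (W r / V r) := by field_simp [(hV r hr).ne']
  rw [hVW]
  rcases lt_trichotomy r c with hrc | rfl | hcr
  · exact mul_nonneg_of_nonpos_of_nonpos
      (sub_nonpos.2 (hφ (Ioo_subset_Icc_self hr) hc hrc.le))
      (mul_nonpos_of_nonneg_of_nonpos (sq_nonneg _) ((hsign r hr).1 hrc))
  · simp
  · exact mul_nonneg (sub_nonneg.2 (hφ hc (Ioo_subset_Icc_self hr) hcr.le))
      (mul_nonneg (sq_nonneg _) ((hsign r hr).2 hcr))

theorem monotoneOn_div_of_mul_sub_mul_nonneg {u u' w w' : ℝ → ℝ} {a b : ℝ}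
    (hu : ∀ r ∈ Ioo a b, HasDerivAt u (u' r) r) (hw : ∀ r ∈ Ioo a b, HasDerivAt w (w' r) r)
    (hpos : ∀ r ∈ Ioo a b, 0 < u r) (hwr : ∀ r ∈ Ioo a b, 0 ≤ u r * w' r - w r * u' r) :
    MonotoneOn (fun r => w r / u r) (Ioo a b) := by
  have hd : ∀ r ∈ Ioo a b,
      HasDerivAt (fun r => w r / u r) ((w' r * u r - w r * u' r) / u r ^ 2) r :=
    fun r hr => (hw r hr).div (hu r hr) (hpos r hr).ne'
  refine monotoneOn_of_hasDerivWithinAt_nonneg (convex_Ioo a b)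
    (fun r hr => (hd r hr).continuousAt.continuousWithinAt)
    (fun r hr => (hd r (interior_subset hr)).hasDerivWithinAt) fun r hr => ?_
  rw [interior_Ioo] at hr
  rw [mul_comm]
  exact div_nonneg (hwr r hr) (sq_nonneg _)

/-- For radial `u` on `ℝⁿ⁺¹` with `u' = ∂ᵣu`, this says `Δu = q u + f`. -/
def SolvesRadialEqOn (n : ℕ) (q f u u' : ℝ → ℝ) (S : Set ℝ) : Prop :=
  ∀ r ∈ S, HasDerivAt u (u' r) r ∧
    HasDerivAt (fun x => x ^ n * u' x) (r ^ n * (q r * u r + f r)) r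

namespace SolvesRadialEqOn

variable {n : ℕ} {q f g u u' w w' : ℝ → ℝ} {S : Set ℝ} {a b κ : ℝ}

theorem const_mul_sub (c : ℝ) (hu : SolvesRadialEqOn n q f u u' S)
    (hw : SolvesRadialEqOn n q g w w' S) :
    SolvesRadialEqOn n q (fun r => c * f r - g r) (fun r => c * u r - w r)
      (fun r => c * u' r - w' r) S := fun r hr =>
  ⟨((hu r hr).1.const_mul c).fun_sub (hw r hr).1,
    (((hu r hr).2.const_mul c).fun_sub (hw r hr).2).congr_deriv (by ring) |>.congr_of_eventuallyEq
      (.of_forall fun x => by ring)⟩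

theorem hasDerivAt_wronskian (hu : SolvesRadialEqOn n q f u u' S)
    (hw : SolvesRadialEqOn n q g w w' S) {r : ℝ} (hr : r ∈ S) :
    HasDerivAt (fun x => x ^ n * (u x * w' x - w x * u' x)) (r ^ n * (u r * g r - w r * f r)) r :=
  (((hu r hr).1.fun_mul (hw r hr).2).fun_sub ((hw r hr).1.fun_mul (hu r hr).2)).congr_deriv
    (by ring) |>.congr_of_eventuallyEq (.of_forall fun x => by ring)

/-- The weighted Wronskian `xⁿ (u w' - w u')` equals `κ ∫ u² xⁿ` over `[a, x]`, so its sign at `b`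
is the sign of `κ`. -/
theorem wronskian_nonneg (ha : 0 ≤ a) (hab : a ≤ b) (hu : SolvesRadialEqOn n q 0 u u' (Ioo a b))
    (hw : SolvesRadialEqOn n q g w w' (Ioo a b)) (hg : ∀ r ∈ Ioo a b, g r = κ * u r)
    (hu_cont : ContinuousOn u (Icc a b))
    (hcont : ContinuousOn (fun x => x ^ n * (u x * w' x - w x * u' x)) (Icc a b))
    (ha0 : a ^ n * (u a * w' a - w a * u' a) = 0) (hb : 0 ≤ b ^ n * (u b * w' b - w b * u' b))
    (hnorm : 0 < ∫ r in a..b, u r ^ 2 * r ^ n) :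
    ∀ r ∈ Ioo a b, 0 ≤ u r * w' r - w r * u' r := by
  have hG : ∀ ρ ∈ Icc a b,
      ρ ^ n * (u ρ * w' ρ - w ρ * u' ρ) = κ * ∫ r in a..ρ, u r ^ 2 * r ^ n := by
    intro ρ hρ
    have hsub : Icc a ρ ⊆ Icc a b := Icc_subset_Icc le_rfl hρ.2
    have hftc := integral_eq_sub_of_hasDerivAt_of_le (f' := fun r => κ * (u r ^ 2 * r ^ n))
      hρ.1 (hcont.mono hsub)
      (fun r hr => (hu.hasDerivAt_wronskian hw ⟨hr.1, hr.2.trans_le hρ.2⟩).congr_deriv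
        (by rw [hg r ⟨hr.1, hr.2.trans_le hρ.2⟩, Pi.zero_apply]; ring))
      (ContinuousOn.intervalIntegrable_of_Icc hρ.1 (by have := hu_cont.mono hsub; fun_prop))
    rwa [intervalIntegral.integral_const_mul, ha0, sub_zero, eq_comm] at hftc
  have hκ : 0 ≤ κ := by
    rw [hG b (right_mem_Icc.2 hab)] at hb
    exact nonneg_of_mul_nonneg_left hb hnorm
  intro r hr
  have hr0 : 0 < r := ha.trans_lt hr.1
  have hI : 0 ≤ ∫ x in a..r, u x ^ 2 * x ^ n :=
    integral_nonneg hr.1.le fun x hx => by have := ha.trans hx.1; positivity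
  have := hG r (Ioo_subset_Icc_self hr) ▸ mul_nonneg hκ hI
  exact (mul_nonneg_iff_of_pos_left (pow_pos hr0 n)).1 this

end SolvesRadialEqOn

/-- Radial Dirichlet eigenfunctions `v μ` (`μ > 0`) of `-Δ + μ r^{2s}` on the ball of radius `R`
in `ℝⁿ⁺¹`, with eigenvalue `E μ`, normalized in `L²(rⁿ dr)`; `vr`, `vμ`, `vμr` stand for `∂ᵣv`,
`∂_μ v`, `∂_μ ∂ᵣv`. -/
structure IsRadialEigenfamily (n : ℕ) (s R : ℝ) (E E' : ℝ → ℝ) (v vr vμ vμr : ℝ → ℝ → ℝ) :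
    Prop where
  hasDerivAt_E : ∀ μ > (0:ℝ), HasDerivAt E (E' μ) μ
  continuousOn_E' : ContinuousOn E' (Ioi 0)
  hasDerivAt_v : ∀ μ > (0:ℝ), ∀ r ∈ Ioo 0 R, HasDerivAt (v μ) (vr μ r) r
  hasDerivAt_vr : ∀ μ > (0:ℝ), ∀ r ∈ Ioo 0 R,
    HasDerivAt (vr μ) ((μ * r ^ (2 * s) - E μ) * v μ r - n / r * vr μ r) r
  hasDerivAt_param_v : ∀ μ > (0:ℝ), ∀ r ∈ Icc 0 R, HasDerivAt (v · r) (vμ μ r) μ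
  hasDerivAt_param_vr : ∀ μ > (0:ℝ), ∀ r ∈ Icc 0 R, HasDerivAt (vr · r) (vμr μ r) μ
  continuousOn_v : ContinuousOn (uncurry v) (Ioi 0 ×ˢ Icc 0 R)
  continuousOn_vr : ContinuousOn (uncurry vr) (Ioi 0 ×ˢ Icc 0 R)
  continuousOn_vμ : ContinuousOn (uncurry vμ) (Ioi 0 ×ˢ Icc 0 R)
  continuousOn_vμr : ContinuousOn (uncurry vμr) (Ioi 0 ×ˢ Icc 0 R)
  v_R : ∀ μ > (0:ℝ), v μ R = 0
  vr_zero : ∀ μ > (0:ℝ), vr μ 0 = 0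
  integral_sq : ∀ μ > (0:ℝ), ∫ r in (0:ℝ)..R, v μ r ^ 2 * r ^ n = 1

/-- Twice the dilation generator `r ∂ᵣ + d/2` in dimension `d = n + 1`. -/
def radialDilation (n : ℕ) (u u' : ℝ → ℝ) (r : ℝ) : ℝ := 2 * r * u' r + (n + 1) * u r

namespace IsRadialEigenfamily

variable {n : ℕ} {s R : ℝ} {E E' : ℝ → ℝ} {v vr vμ vμr : ℝ → ℝ → ℝ} {μ : ℝ}

theorem continuousOn_E (h : IsRadialEigenfamily n s R E E' v vr vμ vμr) :
    ContinuousOn E (Ioi 0) :=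
  fun m hm => (h.hasDerivAt_E m hm).continuousAt.continuousWithinAt

theorem continuousOn_v_apply (h : IsRadialEigenfamily n s R E E' v vr vμ vμr) (hμ : 0 < μ) :
    ContinuousOn (v μ) (Icc 0 R) :=
  ContinuousOn.uncurry_left μ hμ h.continuousOn_v

theorem continuousOn_vr_apply (h : IsRadialEigenfamily n s R E E' v vr vμ vμr) (hμ : 0 < μ) :
    ContinuousOn (vr μ) (Icc 0 R) :=
  ContinuousOn.uncurry_left μ hμ h.continuousOn_vr

theorem continuousOn_vμ_apply (h : IsRadialEigenfamily n s R E E' v vr vμ vμr) (hμ : 0 < μ) :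
    ContinuousOn (vμ μ) (Icc 0 R) :=
  ContinuousOn.uncurry_left μ hμ h.continuousOn_vμ

theorem continuousOn_vμr_apply (h : IsRadialEigenfamily n s R E E' v vr vμ vμr) (hμ : 0 < μ) :
    ContinuousOn (vμr μ) (Icc 0 R) :=
  ContinuousOn.uncurry_left μ hμ h.continuousOn_vμr

theorem solvesRadialEqOn_v (h : IsRadialEigenfamily n s R E E' v vr vμ vμr) (hμ : 0 < μ) :
    SolvesRadialEqOn n (fun r => μ * r ^ (2 * s) - E μ) 0 (v μ) (vr μ) (Ioo 0 R) :=
  fun r hr => ⟨h.hasDerivAt_v μ hμ r hr,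
    ((hasDerivAt_pow_of_ne_zero n hr.1.ne').mul (h.hasDerivAt_vr μ hμ r hr)).congr_deriv
      (by simp only [Pi.zero_apply]; field_simp; ring)⟩

theorem vμ_R (h : IsRadialEigenfamily n s R E E' v vr vμ vμr) (hR : 0 ≤ R) (hμ : 0 < μ) :
    vμ μ R = 0 :=
  (h.hasDerivAt_param_v μ hμ R (right_mem_Icc.2 hR)).unique <|
    (hasDerivAt_const μ 0).congr_of_eventuallyEq <|
      eventually_of_mem (Ioi_mem_nhds hμ) fun m hm => h.v_R m hm

theorem vμr_zero (h : IsRadialEigenfamily n s R E E' v vr vμ vμr) (hR : 0 ≤ R) (hμ : 0 < μ) :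
    vμr μ 0 = 0 :=
  (h.hasDerivAt_param_vr μ hμ 0 (left_mem_Icc.2 hR)).unique <|
    (hasDerivAt_const μ 0).congr_of_eventuallyEq <|
      eventually_of_mem (Ioi_mem_nhds hμ) fun m hm => h.vr_zero m hm

theorem solvesRadialEqOn_vμ (h : IsRadialEigenfamily n s R E E' v vr vμ vμr) (hs : 0 ≤ s)
    (hμ : 0 < μ) :
    SolvesRadialEqOn n (fun r => μ * r ^ (2 * s) - E μ) (fun r => (r ^ (2 * s) - E' μ) * v μ r)
      (vμ μ) (vμr μ) (Ioo 0 R) := by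
  have hrpow : Continuous fun p : ℝ × ℝ => p.2 ^ (2 * s) :=
    continuous_snd.rpow_const fun _ => Or.inr (by positivity)
  have hE : ContinuousOn (fun p : ℝ × ℝ => E p.1) (Ioi 0 ×ˢ Icc 0 R) :=
    h.continuousOn_E.comp continuous_fst.continuousOn fun p hp => hp.1
  have hE' : ContinuousOn (fun p : ℝ × ℝ => E' p.1) (Ioi 0 ×ˢ Icc 0 R) :=
    h.continuousOn_E'.comp continuous_fst.continuousOn fun p hp => hp.1
  have hv := h.continuousOn_v
  have hvr := h.continuousOn_vr
  have hvμ := h.continuousOn_vμ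
  have hvμr := h.continuousOn_vμr
  intro r hr
  constructor
  · exact hasDerivAt_of_hasDerivAt_swap isOpen_Ioi hμ hr
      (fun m hm => h.continuousOn_v_apply hm) (fun m hm => h.hasDerivAt_v m hm)
      hvr hvμr (fun m hm => h.hasDerivAt_param_vr m hm) (h.hasDerivAt_param_v μ hμ)
  · refine (hasDerivAt_of_hasDerivAt_swap isOpen_Ioi hμ hr
      (g := fun m t => t ^ n * ((m * t ^ (2 * s) - E m) * v m t))
      (gₘ := fun m t => t ^ n * ((m * t ^ (2 * s) - E m) * vμ m t
        + (t ^ (2 * s) - E' m) * v m t))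
      (fun m hm => ?_)
      (fun m hm t ht => ((h.solvesRadialEqOn_v hm) t ht).2.congr_deriv (by simp)) ?_ ?_ ?_ ?_)
    · exact (continuous_pow n).continuousOn.mul (h.continuousOn_vr_apply hm)
    · exact (continuous_snd.pow n).continuousOn.mul
        (((continuous_fst.mul hrpow).continuousOn.sub hE).mul hv)
    · exact (continuous_snd.pow n).continuousOn.mul
        ((((continuous_fst.mul hrpow).continuousOn.sub hE).mul hvμ).add
          ((hrpow.continuousOn.sub hE').mul hv))
    · intro m hm t ht
      exact (((hasDerivAt_mul_const _).fun_sub (h.hasDerivAt_E m hm)).fun_mul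
        (h.hasDerivAt_param_v m hm t ht)).const_mul _ |>.congr_deriv (by ring)
    · exact fun t ht => (h.hasDerivAt_param_vr μ hμ t ht).const_mul _

theorem solvesRadialEqOn_dilation (h : IsRadialEigenfamily n s R E E' v vr vμ vμr)
    (hμ : 0 < μ) :
    SolvesRadialEqOn n (fun r => μ * r ^ (2 * s) - E μ)
      (fun r => 4 * ((1 + s) * μ * r ^ (2 * s) - E μ) * v μ r) (radialDilation n (v μ) (vr μ))
      (fun r => (3 - n) * vr μ r + 2 * r * ((μ * r ^ (2 * s) - E μ) * v μ r)) (Ioo 0 R) := by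
  intro r hr
  have hr0 : r ≠ 0 := hr.1.ne'
  have hv := h.hasDerivAt_v μ hμ r hr
  have hvr := h.hasDerivAt_vr μ hμ r hr
  have hq : HasDerivAt (fun x => μ * x ^ (2 * s) - E μ) (μ * (2 * s * (r ^ (2 * s) / r))) r := by
    simpa [Real.rpow_sub_one hr0] using
      ((Real.hasDerivAt_rpow_const (p := 2 * s) (Or.inl hr0)).const_mul μ).sub_const (E μ)
  constructor
  · exact (((hasDerivAt_id' r).const_mul 2).fun_mul hvr).fun_add (hv.const_mul _)
      |>.congr_deriv (by field_simp; ring)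
  · refine ((hasDerivAt_pow_of_ne_zero n hr0).fun_mul ((hvr.const_mul _).fun_add
      (((hasDerivAt_id' r).const_mul 2).fun_mul (hq.fun_mul hv)))).congr_deriv ?_
    simp only [radialDilation]
    field_simp
    ring

theorem integral_v_mul_vμ (h : IsRadialEigenfamily n s R E E' v vr vμ vμr) (hR : 0 ≤ R)
    (hμ : 0 < μ) : ∫ r in (0:ℝ)..R, v μ r * vμ μ r * r ^ n = 0 := by
  have hderiv := integral_eq_of_hasDerivAt_integral isOpen_Ioi hR hμ
    (F := fun m t => v m t ^ 2 * t ^ n) (F' := fun m t => 2 * (v m t * vμ m t * t ^ n))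
    (by exact (h.continuousOn_v.pow 2).mul (continuous_snd.pow n).continuousOn)
    (by exact continuousOn_const.mul ((h.continuousOn_v.mul h.continuousOn_vμ).mul
      (continuous_snd.pow n).continuousOn))
    (fun m hm t ht => ((h.hasDerivAt_param_v m hm t ht).pow 2).mul_const _ |>.congr_deriv
      (by ring))
    h.integral_sq (hasDerivAt_const μ 1)
  rw [intervalIntegral.integral_const_mul] at hderiv
  linarith

theorem integral_rpow_mul_sq (h : IsRadialEigenfamily n s R E E' v vr vμ vμr) (hR : 0 ≤ R)
    (hs : 0 ≤ s) (hμ : 0 < μ) : ∫ r in (0:ℝ)..R, r ^ (2 * s) * v μ r ^ 2 * r ^ n = E' μ := by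
  have hrpow : ContinuousOn (fun r : ℝ => r ^ (2 * s)) (Icc 0 R) :=
    (Real.continuous_rpow_const (by positivity)).continuousOn
  have hv := h.continuousOn_v_apply hμ
  have hvr := h.continuousOn_vr_apply hμ
  have hvμ := h.continuousOn_vμ_apply hμ
  have hvμr := h.continuousOn_vμr_apply hμ
  have hwronskian := integral_eq_sub_of_hasDerivAt_of_le hR (by fun_prop)
    (fun r hr => (h.solvesRadialEqOn_v hμ).hasDerivAt_wronskian (h.solvesRadialEqOn_vμ hs hμ) hr)
    (ContinuousOn.intervalIntegrable_of_Icc hR (by fun_prop))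
  simp only [h.v_R μ hμ, h.vμ_R hR hμ, h.vr_zero μ hμ, h.vμr_zero hR hμ, mul_zero, zero_mul,
    sub_self] at hwronskian
  have hsplit : ∫ r in (0:ℝ)..R, (r ^ (2 * s) * v μ r ^ 2 * r ^ n - E' μ * (v μ r ^ 2 * r ^ n))
      = 0 := by
    refine .trans (integral_congr fun r _ => ?_) hwronskian
    simp only [Pi.zero_apply]
    ring
  rw [integral_sub (ContinuousOn.intervalIntegrable_of_Icc hR (by fun_prop))
    (ContinuousOn.intervalIntegrable_of_Icc hR (by fun_prop)), intervalIntegral.integral_const_mul,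
    h.integral_sq μ hμ] at hsplit
  linarith

theorem integral_rpow_mul_v_mul_vμ (h : IsRadialEigenfamily n s R E E' v vr vμ vμr)
    (hR : 0 ≤ R) (hs : 0 ≤ s) (hμ : 0 < μ) {e : ℝ} (he : HasDerivAt E' e μ) :
    ∫ r in (0:ℝ)..R, r ^ (2 * s) * (v μ r * vμ μ r) * r ^ n = e / 2 := by
  have hrpow : Continuous fun p : ℝ × ℝ => p.2 ^ (2 * s) :=
    continuous_snd.rpow_const fun _ => Or.inr (by positivity)
  have hderiv := integral_eq_of_hasDerivAt_integral isOpen_Ioi hR hμ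
    (F := fun m t => t ^ (2 * s) * v m t ^ 2 * t ^ n)
    (F' := fun m t => 2 * (t ^ (2 * s) * (v m t * vμ m t) * t ^ n))
    (by exact (hrpow.continuousOn.mul (h.continuousOn_v.pow 2)).mul
          (continuous_snd.pow n).continuousOn)
    (by exact continuousOn_const.mul ((hrpow.continuousOn.mul
          (h.continuousOn_v.mul h.continuousOn_vμ)).mul (continuous_snd.pow n).continuousOn))
    (fun m hm t ht => (((h.hasDerivAt_param_v m hm t ht).pow 2).const_mul _).mul_const _
      |>.congr_deriv (by ring))
    (fun m hm => h.integral_rpow_mul_sq hR hs hm) he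
  rw [intervalIntegral.integral_const_mul] at hderiv
  linarith

/-- Virial identity: integrate `(rᵖ rⁿ⁺¹ v²)'`. -/
theorem integral_rpow_mul_v_mul_dilation (h : IsRadialEigenfamily n s R E E' v vr vμ vμr)
    (hR : 0 ≤ R) (hμ : 0 < μ) {p : ℝ} (hp : 0 ≤ p) :
    ∫ r in (0:ℝ)..R, r ^ p * (v μ r * radialDilation n (v μ) (vr μ) r) * r ^ n
      = -(p * ∫ r in (0:ℝ)..R, r ^ p * v μ r ^ 2 * r ^ n) := by
  have hrpow : ContinuousOn (fun r : ℝ => r ^ p) (Icc 0 R) :=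
    (Real.continuous_rpow_const hp).continuousOn
  have hv := h.continuousOn_v_apply hμ
  have hvr := h.continuousOn_vr_apply hμ
  have hderiv : ∀ r ∈ Ioo 0 R, HasDerivAt (fun x => x ^ p * (x ^ (n + 1) * v μ x ^ 2))
      (r ^ p * (v μ r * radialDilation n (v μ) (vr μ) r) * r ^ n + p * (r ^ p * v μ r ^ 2 * r ^ n))
      r := by
    intro r hr
    have hr0 : r ≠ 0 := hr.1.ne'
    refine ((Real.hasDerivAt_rpow_const (p := p) (Or.inl hr0)).fun_mul
      ((hasDerivAt_pow_of_ne_zero (n + 1) hr0).fun_mul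
        ((h.hasDerivAt_v μ hμ r hr).fun_pow 2))).congr_deriv ?_
    rw [Real.rpow_sub_one hr0]
    simp only [radialDilation]
    field_simp
    push_cast
    ring
  have hftc := integral_eq_sub_of_hasDerivAt_of_le hR (by fun_prop) hderiv
    (ContinuousOn.intervalIntegrable_of_Icc hR (by simp only [radialDilation]; fun_prop))
  rw [integral_add (ContinuousOn.intervalIntegrable_of_Icc hR
    (by simp only [radialDilation]; fun_prop)) (ContinuousOn.intervalIntegrable_of_Icc hR
    (by fun_prop)), intervalIntegral.integral_const_mul] at hftc
  simp [h.v_R μ hμ] at hftc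
  linarith

theorem monotoneOn_comparison_div (h : IsRadialEigenfamily n s R E E' v vr vμ vμr) (hR : 0 ≤ R)
    (hs : 0 ≤ s) (hμ : 0 < μ) (hpos : ∀ r ∈ Ioo 0 R, 0 < v μ r) :
    MonotoneOn (fun r => (4 * (1 + s) * μ * vμ μ r - radialDilation n (v μ) (vr μ) r) / v μ r)
      (Ioo 0 R) := by
  have hv := h.solvesRadialEqOn_v hμ
  have hW := (h.solvesRadialEqOn_vμ hs hμ).const_mul_sub (4 * (1 + s) * μ)
    (h.solvesRadialEqOn_dilation hμ)
  have hrpow : ContinuousOn (fun r : ℝ => r ^ (2 * s)) (Icc 0 R) :=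
    (Real.continuous_rpow_const (by positivity)).continuousOn
  have hv_cont := h.continuousOn_v_apply hμ
  have hvr_cont := h.continuousOn_vr_apply hμ
  have hvμ_cont := h.continuousOn_vμ_apply hμ
  have hvμr_cont := h.continuousOn_vμr_apply hμ
  -- the `r^{2s} v` sources of `4 (1 + s) μ ∂_μ v` and of the dilation cancel
  refine monotoneOn_div_of_mul_sub_mul_nonneg (fun r hr => (hv r hr).1) (fun r hr => (hW r hr).1)
    hpos (hv.wronskian_nonneg le_rfl hR hW (κ := 4 * E μ - 4 * (1 + s) * μ * E' μ)
      (fun r _ => by ring) hv_cont ?_ ?_ ?_ ?_)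
  · simp only [radialDilation]
    fun_prop
  · simp [h.vr_zero μ hμ, h.vμr_zero hR hμ]
  · simp only [radialDilation, h.v_R μ hμ, h.vμ_R hR hμ]
    ring_nf
    positivity
  · rw [h.integral_sq μ hμ]
    exact one_pos

theorem integral_v_mul_comparison (h : IsRadialEigenfamily n s R E E' v vr vμ vμr)
    (hR : 0 ≤ R) (hμ : 0 < μ) :
    ∫ r in (0:ℝ)..R, v μ r * (4 * (1 + s) * μ * vμ μ r - radialDilation n (v μ) (vr μ) r) * r ^ n
      = 0 := by
  have hv := h.continuousOn_v_apply hμ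
  have hvr := h.continuousOn_vr_apply hμ
  have hvμ := h.continuousOn_vμ_apply hμ
  have hD := h.integral_rpow_mul_v_mul_dilation hR hμ le_rfl
  simp only [Real.rpow_zero, one_mul, zero_mul, neg_zero] at hD
  calc _ = 4 * (1 + s) * μ * (∫ r in (0:ℝ)..R, v μ r * vμ μ r * r ^ n)
        - ∫ r in (0:ℝ)..R, v μ r * radialDilation n (v μ) (vr μ) r * r ^ n := by
        rw [← intervalIntegral.integral_const_mul, ← integral_sub
          (ContinuousOn.intervalIntegrable_of_Icc hR (by fun_prop))
          (ContinuousOn.intervalIntegrable_of_Icc hR (by simp only [radialDilation]; fun_prop))]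
        exact integral_congr fun r _ => by ring
    _ = 0 := by rw [h.integral_v_mul_vμ hR hμ, hD, mul_zero, sub_zero]

theorem integral_rpow_mul_v_mul_comparison (h : IsRadialEigenfamily n s R E E' v vr vμ vμr)
    (hR : 0 ≤ R) (hs : 0 ≤ s) (hμ : 0 < μ) {e : ℝ} (he : HasDerivAt E' e μ) :
    ∫ r in (0:ℝ)..R,
        r ^ (2 * s) * (v μ r * (4 * (1 + s) * μ * vμ μ r - radialDilation n (v μ) (vr μ) r)) * r ^ n
      = 2 * (1 + s) * μ * e + 2 * s * E' μ := by
  have hrpow : ContinuousOn (fun r : ℝ => r ^ (2 * s)) (Icc 0 R) :=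
    (Real.continuous_rpow_const (by positivity)).continuousOn
  have hv := h.continuousOn_v_apply hμ
  have hvr := h.continuousOn_vr_apply hμ
  have hvμ := h.continuousOn_vμ_apply hμ
  calc _ = 4 * (1 + s) * μ * (∫ r in (0:ℝ)..R, r ^ (2 * s) * (v μ r * vμ μ r) * r ^ n)
        - ∫ r in (0:ℝ)..R, r ^ (2 * s) * (v μ r * radialDilation n (v μ) (vr μ) r) * r ^ n := by
        rw [← intervalIntegral.integral_const_mul, ← integral_sub
          (ContinuousOn.intervalIntegrable_of_Icc hR (by fun_prop))
          (ContinuousOn.intervalIntegrable_of_Icc hR (by simp only [radialDilation]; fun_prop))]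
        exact integral_congr fun r _ => by ring
    _ = _ := by
      rw [h.integral_rpow_mul_v_mul_vμ hR hs hμ he,
        h.integral_rpow_mul_v_mul_dilation hR hμ (by positivity), h.integral_rpow_mul_sq hR hs hμ]
      ring

theorem s_mul_E'_add_mul_E''_nonneg (h : IsRadialEigenfamily n s R E E' v vr vμ vμr)
    (hR : 0 ≤ R) (hs : 0 ≤ s) (hμ : 0 < μ) (hpos : ∀ r ∈ Ioo 0 R, 0 < v μ r) {e : ℝ}
    (he : HasDerivAt E' e μ) : 0 ≤ s * E' μ + μ * (1 + s) * e := by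
  set W := fun r => 4 * (1 + s) * μ * vμ μ r - radialDilation n (v μ) (vr μ) r
  have hrpow : ContinuousOn (fun r : ℝ => r ^ (2 * s)) (Icc 0 R) :=
    (Real.continuous_rpow_const (by positivity)).continuousOn
  have hv := h.continuousOn_v_apply hμ
  have hvr := h.continuousOn_vr_apply hμ
  have hvμ := h.continuousOn_vμ_apply hμ
  obtain ⟨c, hc⟩ := exists_sub_mul_nonneg_of_monotoneOn_div hR hpos
    (h.monotoneOn_comparison_div hR hs hμ hpos)
    (fun x hx y _ hxy => Real.rpow_le_rpow hx.1 hxy (by positivity) : MonotoneOn (· ^ (2 * s)) _)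
  have hint : 0 ≤ ∫ r in (0:ℝ)..R, (r ^ (2 * s) - c) * (v μ r * W r) * r ^ n := by
    rw [integral_of_le hR]
    refine setIntegral_nonneg measurableSet_Ioc fun r hr => ?_
    rcases hr.2.lt_or_eq with hlt | rfl
    · exact mul_nonneg (hc r ⟨hr.1, hlt⟩) (pow_nonneg hr.1.le n)
    · simp [h.v_R μ hμ]
  have hsplit : ∫ r in (0:ℝ)..R, (r ^ (2 * s) - c) * (v μ r * W r) * r ^ n
      = (∫ r in (0:ℝ)..R, r ^ (2 * s) * (v μ r * W r) * r ^ n)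
        - c * ∫ r in (0:ℝ)..R, v μ r * W r * r ^ n := by
    rw [← intervalIntegral.integral_const_mul, ← integral_sub
      (ContinuousOn.intervalIntegrable_of_Icc hR (by simp only [W, radialDilation]; fun_prop))
      (ContinuousOn.intervalIntegrable_of_Icc hR (by simp only [W, radialDilation]; fun_prop))]
    exact integral_congr fun r _ => by ring
  rw [hsplit, h.integral_rpow_mul_v_mul_comparison hR hs hμ he,
    h.integral_v_mul_comparison hR hμ] at hint
  linarith

end IsRadialEigenfamily

theorem sE1dot_plus_muE1ddot_nonneg_general (d₁ : ℕ) (hd₁ : 1 ≤ d₁) (s R : ℝ) (hs : 0 < s) (hR : 0 < R)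
    (E E' E'' : ℝ → ℝ) (v vr vrr vμ vμr : ℝ → ℝ → ℝ)
    (hE : ∀ μ > (0:ℝ), HasDerivAt E (E' μ) μ)
    (hE' : ∀ μ > (0:ℝ), HasDerivAt E' (E'' μ) μ)
    (hvr : ∀ μ > (0:ℝ), ∀ r ∈ Set.Icc 0 R, HasDerivWithinAt (v μ) (vr μ r) (Set.Icc 0 R) r)
    (hvrr : ∀ μ > (0:ℝ), ∀ r ∈ Set.Icc 0 R, HasDerivWithinAt (vr μ) (vrr μ r) (Set.Icc 0 R) r)
    (hvμ : ∀ μ > (0:ℝ), ∀ r ∈ Set.Icc 0 R, HasDerivAt (fun m => v m r) (vμ μ r) μ)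
    (hvμr : ∀ μ > (0:ℝ), ∀ r ∈ Set.Icc 0 R, HasDerivAt (fun m => vr m r) (vμr μ r) μ)
    (hcv : ContinuousOn (fun p : ℝ × ℝ => v p.1 p.2) (Set.Ioi 0 ×ˢ Set.Icc 0 R))
    (hcvr : ContinuousOn (fun p : ℝ × ℝ => vr p.1 p.2) (Set.Ioi 0 ×ˢ Set.Icc 0 R))
    (hcvμ : ContinuousOn (fun p : ℝ × ℝ => vμ p.1 p.2) (Set.Ioi 0 ×ˢ Set.Icc 0 R))
    (hcvμr : ContinuousOn (fun p : ℝ × ℝ => vμr p.1 p.2) (Set.Ioi 0 ×ˢ Set.Icc 0 R))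
    (hvpos : ∀ μ > (0:ℝ), ∀ r ∈ Set.Ioo 0 R, 0 < v μ r)
    (hbcR : ∀ μ > (0:ℝ), v μ R = 0)
    (hbc0 : ∀ μ > (0:ℝ), vr μ 0 = 0)
    (hnorm : ∀ μ > (0:ℝ), ∫ r in (0:ℝ)..R, (v μ r) ^ 2 * r ^ (d₁ - 1) = 1)
    (hode : ∀ μ > (0:ℝ), ∀ r ∈ Set.Ioo 0 R,
      -(vrr μ r) - (((d₁ : ℝ) - 1) / r) * vr μ r + μ * r ^ (2 * s) * v μ r = E μ * v μ r) :
    ∀ μ > (0:ℝ), 0 ≤ s * E' μ + μ * (1 + s) * E'' μ := by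
  obtain ⟨n, rfl⟩ := Nat.exists_eq_add_of_le' hd₁
  have h : IsRadialEigenfamily n s R E E' v vr vμ vμr :=
    { hasDerivAt_E := hE
      continuousOn_E' := fun m hm => (hE' m hm).continuousAt.continuousWithinAt
      hasDerivAt_v := fun m hm r hr =>
        (hvr m hm r (Ioo_subset_Icc_self hr)).hasDerivAt (Icc_mem_nhds hr.1 hr.2)
      hasDerivAt_vr := fun m hm r hr =>
        ((hvrr m hm r (Ioo_subset_Icc_self hr)).hasDerivAt
          (Icc_mem_nhds hr.1 hr.2)).congr_deriv <| by
          have := hode m hm r hr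
          push_cast at this
          linear_combination -this
      hasDerivAt_param_v := hvμ
      hasDerivAt_param_vr := hvμr
      continuousOn_v := hcv
      continuousOn_vr := hcvr
      continuousOn_vμ := hcvμ
      continuousOn_vμr := hcvμr
      v_R := hbcR
      vr_zero := hbc0
      integral_sq := by simpa using hnorm }
  exact fun μ hμ => h.s_mul_E'_add_mul_E''_nonneg hR.le hs.le hμ (hvpos μ hμ) (hE' μ hμ)

/-- for a family `v(μ,·)` of positive normalized radial Dirichlet
eigenfunctions of `-Δ + μ r^{2s}` on the ball of radius `R` in `ℝ^{d₁}` with first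
eigenvalue `E(μ)`, twice differentiable in `μ`, one has
`s E'(μ) + μ(1+s) E''(μ) ≥ 0` for all `μ > 0`. -/
theorem sE1dot_plus_muE1ddot_nonneg (d₁ : ℕ) (hd₁ : 1 ≤ d₁) (s R : ℝ) (hs : 0 < s) (hR : 0 < R)
    (E E' E'' : ℝ → ℝ) (v vr vrr vμ vμr vμμ vμμr : ℝ → ℝ → ℝ)
    (hE : ∀ μ > (0:ℝ), HasDerivAt E (E' μ) μ)
    (hE' : ∀ μ > (0:ℝ), HasDerivAt E' (E'' μ) μ)
    (hvr : ∀ μ > (0:ℝ), ∀ r ∈ Set.Icc 0 R, HasDerivWithinAt (v μ) (vr μ r) (Set.Icc 0 R) r)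
    (hvrr : ∀ μ > (0:ℝ), ∀ r ∈ Set.Icc 0 R, HasDerivWithinAt (vr μ) (vrr μ r) (Set.Icc 0 R) r)
    (hvμ : ∀ μ > (0:ℝ), ∀ r ∈ Set.Icc 0 R, HasDerivAt (fun m => v m r) (vμ μ r) μ)
    (hvμr : ∀ μ > (0:ℝ), ∀ r ∈ Set.Icc 0 R, HasDerivAt (fun m => vr m r) (vμr μ r) μ)
    (hvμμ : ∀ μ > (0:ℝ), ∀ r ∈ Set.Icc 0 R, HasDerivAt (fun m => vμ m r) (vμμ μ r) μ)
    (hvμμr : ∀ μ > (0:ℝ), ∀ r ∈ Set.Icc 0 R, HasDerivAt (fun m => vμr m r) (vμμr μ r) μ)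
    (hcv : ContinuousOn (fun p : ℝ × ℝ => v p.1 p.2) (Set.Ioi 0 ×ˢ Set.Icc 0 R))
    (hcvr : ContinuousOn (fun p : ℝ × ℝ => vr p.1 p.2) (Set.Ioi 0 ×ˢ Set.Icc 0 R))
    (hcvrr : ContinuousOn (fun p : ℝ × ℝ => vrr p.1 p.2) (Set.Ioi 0 ×ˢ Set.Icc 0 R))
    (hcvμ : ContinuousOn (fun p : ℝ × ℝ => vμ p.1 p.2) (Set.Ioi 0 ×ˢ Set.Icc 0 R))
    (hcvμr : ContinuousOn (fun p : ℝ × ℝ => vμr p.1 p.2) (Set.Ioi 0 ×ˢ Set.Icc 0 R))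
    (hcvμμ : ContinuousOn (fun p : ℝ × ℝ => vμμ p.1 p.2) (Set.Ioi 0 ×ˢ Set.Icc 0 R))
    (hcvμμr : ContinuousOn (fun p : ℝ × ℝ => vμμr p.1 p.2) (Set.Ioi 0 ×ˢ Set.Icc 0 R))
    (hvpos : ∀ μ > (0:ℝ), ∀ r ∈ Set.Ioo 0 R, 0 < v μ r)
    (hbcR : ∀ μ > (0:ℝ), v μ R = 0)
    (hbc0 : ∀ μ > (0:ℝ), vr μ 0 = 0)
    (hnorm : ∀ μ > (0:ℝ), ∫ r in (0:ℝ)..R, (v μ r) ^ 2 * r ^ (d₁ - 1) = 1)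
    (hode : ∀ μ > (0:ℝ), ∀ r ∈ Set.Ioo 0 R,
      -(vrr μ r) - (((d₁ : ℝ) - 1) / r) * vr μ r + μ * r ^ (2 * s) * v μ r = E μ * v μ r) :
    ∀ μ > (0:ℝ), 0 ≤ s * E' μ + μ * (1 + s) * E'' μ :=
  sE1dot_plus_muE1ddot_nonneg_general d₁ hd₁ s R hs hR E E' E'' v vr vrr vμ vμr hE hE' hvr hvrr hvμ
    hvμr hcv hcvr hcvμ hcvμr hvpos hbcR hbc0 hnorm hode
end

section
/- Let F : (0,∞) → ℝ be twice continuously differentiable with lim_{σ→0⁺} F(σ) = +∞ and lim_{σ→+∞} F(σ) = +∞. Suppose that F''(σ) > 0 for every σ ∈ (0,∞) with F'(σ) = 0. Then F has exactly one critical point σ* ∈ (0,∞), and σ* is the unique global minimizer of F: F(σ*) < F(σ) for all σ ∈ (0,∞) with σ ≠ σ*. -/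
open Set Filter

/-- Auxiliary: every critical point is a strict local minimum. -/
lemma aux_strict_local_min (F F' F'' : ℝ → ℝ)
    (hF : ∀ σ > (0:ℝ), HasDerivAt F (F' σ) σ)
    (hF' : ∀ σ > (0:ℝ), HasDerivAt F' (F'' σ) σ)
    (hF'' : ContinuousOn F'' (Set.Ioi 0))
    (hcrit : ∀ σ > (0:ℝ), F' σ = 0 → 0 < F'' σ)
    (c : ℝ) (hc : 0 < c) (hc0 : F' c = 0) :
    ∃ δ > (0:ℝ), 0 < c - δ ∧ ∀ x ∈ Ioo (c-δ) (c+δ), x ≠ c → F c < F x := by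
  have hF''c : 0 < F'' c := hcrit c hc hc0
  have hcont : ContinuousAt F'' c := hF''.continuousAt (Ioi_mem_nhds hc)
  have hmem : {x : ℝ | 0 < F'' x} ∩ Ioi 0 ∈ nhds c :=
    Filter.inter_mem (hcont (Ioi_mem_nhds hF''c)) (Ioi_mem_nhds hc)
  obtain ⟨ε, hε, hball⟩ := Metric.mem_nhds_iff.mp hmem
  rw [Real.ball_eq_Ioo] at hball
  refine ⟨ε/2, by linarith, ?_, ?_⟩
  · have h2 : c - ε/2 ∈ Ioo (c-ε) (c+ε) := by constructor <;> linarith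
    exact (hball h2).2
  · -- F' is strictly monotone on Ioo (c-ε) (c+ε)
    have hsub : Ioo (c-ε) (c+ε) ⊆ Ioi 0 := fun x hx => (hball hx).2
    have hmono : StrictMonoOn F' (Ioo (c-ε) (c+ε)) := by
      apply strictMonoOn_of_deriv_pos (convex_Ioo _ _)
      · exact fun x hx => ((hF' x (hsub hx)).continuousAt).continuousWithinAt
      · intro x hx
        rw [interior_Ioo] at hx
        rw [(hF' x (hsub hx)).deriv]
        exact (hball hx).1
    have hcmem : c ∈ Ioo (c-ε) (c+ε) := by constructor <;> linarith
    intro x hx hxne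
    have hxε : x ∈ Ioo (c-ε) (c+ε) := ⟨by linarith [hx.1], by linarith [hx.2]⟩
    rcases lt_or_gt_of_ne hxne with hlt | hgt
    · -- x < c : F' < 0 on (x, c), so F strictly anti on [x, c]
      have hanti : StrictAntiOn F (Icc x c) := by
        apply strictAntiOn_of_deriv_neg (convex_Icc _ _)
        · intro y hy
          exact ((hF y (hsub ⟨lt_of_lt_of_le hxε.1 hy.1, lt_of_le_of_lt hy.2 hcmem.2⟩)).continuousAt).continuousWithinAt
        · intro y hy
          rw [interior_Icc] at hy
          have hy' : y ∈ Ioo (c-ε) (c+ε) := ⟨lt_trans hxε.1 hy.1, lt_trans hy.2 hcmem.2⟩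
          rw [(hF y (hsub hy')).deriv]
          have := hmono hy' hcmem hy.2
          rwa [hc0] at this
      have := hanti (left_mem_Icc.mpr hlt.le) (right_mem_Icc.mpr hlt.le) hlt
      exact this
    · -- c < x
      have hmonoF : StrictMonoOn F (Icc c x) := by
        apply strictMonoOn_of_deriv_pos (convex_Icc _ _)
        · intro y hy
          exact ((hF y (hsub ⟨lt_of_lt_of_le hcmem.1 hy.1, lt_of_le_of_lt hy.2 hxε.2⟩)).continuousAt).continuousWithinAt
        · intro y hy
          rw [interior_Icc] at hy
          have hy' : y ∈ Ioo (c-ε) (c+ε) := ⟨lt_trans hcmem.1 hy.1, lt_trans hy.2 hxε.2⟩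
          rw [(hF y (hsub hy')).deriv]
          have := hmono hcmem hy' hy.1
          rwa [hc0] at this
      exact hmonoF (left_mem_Icc.mpr hgt.le) (right_mem_Icc.mpr hgt.le) hgt

/-- a `C²` function on `(0,∞)` blowing up at `0⁺` and at `+∞`, all of whose
critical points are nondegenerate local minima, has a unique critical point, which is its
unique (strict) global minimizer. -/
theorem unique_min_of_coercive_of_posSecondDeriv_at_critical (F F' F'' : ℝ → ℝ)
    (hF : ∀ σ > (0:ℝ), HasDerivAt F (F' σ) σ)
    (hF' : ∀ σ > (0:ℝ), HasDerivAt F' (F'' σ) σ)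
    (hF'' : ContinuousOn F'' (Set.Ioi 0))
    (h0 : Filter.Tendsto F (nhdsWithin 0 (Set.Ioi 0)) Filter.atTop)
    (hinf : Filter.Tendsto F Filter.atTop Filter.atTop)
    (hcrit : ∀ σ > (0:ℝ), F' σ = 0 → 0 < F'' σ) :
    ∃ σstar : ℝ, 0 < σstar ∧ F' σstar = 0 ∧
      (∀ σ > (0:ℝ), F' σ = 0 → σ = σstar) ∧
      ∀ σ > (0:ℝ), σ ≠ σstar → F σstar < F σ := by
  have hFcont : ContinuousOn F (Ioi 0) :=
    fun x hx => ((hF x hx).continuousAt).continuousWithinAt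
  -- no two distinct critical points
  have key : ∀ a b : ℝ, 0 < a → a < b → F' a = 0 → F' b = 0 → False := by
    intro a b ha hab ha' hb'
    have hb : 0 < b := lt_trans ha hab
    obtain ⟨δa, hδa, hδa0, hmina⟩ := aux_strict_local_min F F' F'' hF hF' hF'' hcrit a ha ha'
    obtain ⟨δb, hδb, hδb0, hminb⟩ := aux_strict_local_min F F' F'' hF hF' hF'' hcrit b hb hb'
    have hsub : Icc a b ⊆ Ioi 0 := fun x hx => lt_of_lt_of_le ha hx.1
    obtain ⟨m, hm, hmax⟩ := isCompact_Icc.exists_isMaxOn ⟨a, left_mem_Icc.mpr hab.le⟩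
      (hFcont.mono hsub)
    -- m ≠ a
    have hma : a < m := by
      rcases eq_or_lt_of_le hm.1 with h | h
      · exfalso
        set x := min (a + δa/2) ((a+b)/2) with hxdef
        have hx1 : a < x := lt_min (by linarith) (by linarith)
        have hx2 : x < a + δa := lt_of_le_of_lt (min_le_left _ _) (by linarith)
        have hx3 : x ≤ (a+b)/2 := min_le_right _ _
        have hxI : x ∈ Icc a b := ⟨hx1.le, by linarith⟩
        have := hmina x ⟨by linarith, hx2⟩ (ne_of_gt hx1)
        have hle := hmax hxI
        rw [← h] at hle
        exact absurd (lt_of_lt_of_le this hle) (lt_irrefl _)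
      · exact h
    have hmb : m < b := by
      rcases eq_or_lt_of_le hm.2 with h | h
      · exfalso
        set x := max (b - δb/2) ((a+b)/2) with hxdef
        have hx1 : x < b := max_lt (by linarith) (by linarith)
        have hx2 : b - δb < x := lt_of_lt_of_le (by linarith) (le_max_left _ _)
        have hx3 : (a+b)/2 ≤ x := le_max_right _ _
        have hxI : x ∈ Icc a b := ⟨by linarith, hx1.le⟩
        have := hminb x ⟨hx2, by linarith⟩ (ne_of_lt hx1)
        have hle := hmax hxI
        rw [h] at hle
        exact absurd (lt_of_lt_of_le this hle) (lt_irrefl _)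
      · exact h
    -- m is an interior local max, hence critical, hence a strict local min: contradiction
    have hlm : IsLocalMax F m := hmax.isLocalMax (Icc_mem_nhds hma hmb)
    have hm' : F' m = 0 := hlm.hasDerivAt_eq_zero (hF m (lt_trans ha hma))
    obtain ⟨δm, hδm, hδm0, hminm⟩ := aux_strict_local_min F F' F'' hF hF' hF'' hcrit m
      (lt_trans ha hma) hm'
    set x := min (m + δm/2) ((m+b)/2) with hxdef
    have hx1 : m < x := lt_min (by linarith) (by linarith)
    have hx2 : x < m + δm := lt_of_le_of_lt (min_le_left _ _) (by linarith)
    have hx3 : x ≤ (m+b)/2 := min_le_right _ _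
    have hxI : x ∈ Icc a b := ⟨by linarith, by linarith⟩
    exact absurd (lt_of_lt_of_le (hminm x ⟨by linarith, hx2⟩ (ne_of_gt hx1)) (hmax hxI))
      (lt_irrefl _)
  -- existence of a global minimizer
  have hev0 : ∀ᶠ x in nhdsWithin 0 (Ioi 0), F 1 < F x := h0.eventually (eventually_gt_atTop (F 1))
  obtain ⟨u, hu, hIoo⟩ := mem_nhdsGT_iff_exists_Ioo_subset.mp hev0
  have hu0 : (0:ℝ) < u := hu
  obtain ⟨M, hM⟩ := (Filter.eventually_atTop).mp (hinf.eventually (eventually_gt_atTop (F 1)))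
  set a : ℝ := min (u/2) 1 with hadef
  have ha0 : 0 < a := lt_min (by linarith) one_pos
  have hau : a < u := lt_of_le_of_lt (min_le_left _ _) (by linarith)
  have ha1 : a ≤ 1 := min_le_right _ _
  set b : ℝ := max M 1 with hbdef
  have hb1 : (1:ℝ) ≤ b := le_max_right _ _
  have hab : a ≤ b := le_trans ha1 hb1
  have hsub : Icc a b ⊆ Ioi 0 := fun x hx => lt_of_lt_of_le ha0 hx.1
  obtain ⟨σstar, hσmem, hσmin⟩ := isCompact_Icc.exists_isMinOn
    ⟨1, ⟨ha1, hb1⟩⟩ (hFcont.mono hsub)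
  have hσpos : 0 < σstar := lt_of_lt_of_le ha0 hσmem.1
  have hσle1 : F σstar ≤ F 1 := hσmin ⟨ha1, hb1⟩
  -- global min on Ioi 0
  have hglobal : ∀ x > (0:ℝ), F σstar ≤ F x := by
    intro x hx
    rcases lt_or_ge x a with h | h
    · have : x ∈ Ioo 0 u := ⟨hx, lt_trans h hau⟩
      exact le_of_lt (lt_of_le_of_lt hσle1 (hIoo this))
    rcases le_or_gt x b with h' | h'
    · exact hσmin ⟨h, h'⟩
    · have : F 1 < F x := hM x (le_of_lt (lt_of_le_of_lt (le_max_left M 1) h'))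
      exact le_of_lt (lt_of_le_of_lt hσle1 this)
  have hminOn : IsMinOn F (Ioi 0) σstar := fun x hx => hglobal x hx
  have hσcrit : F' σstar = 0 :=
    (hminOn.isLocalMin (Ioi_mem_nhds hσpos)).hasDerivAt_eq_zero (hF σstar hσpos)
  refine ⟨σstar, hσpos, hσcrit, ?_, ?_⟩
  · intro σ hσ hσ'
    by_contra hne
    rcases lt_or_gt_of_ne hne with h | h
    · exact key σ σstar hσ h hσ' hσcrit
    · exact key σstar σ hσpos h hσcrit hσ'
  · intro σ hσ hne
    rcases lt_or_eq_of_le (hglobal σ hσ) with h | h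
    · exact h
    · exfalso
      have hσminOn : IsMinOn F (Ioi 0) σ := by
        intro x hx
        calc F σ = F σstar := h.symm
        _ ≤ F x := hglobal x hx
      have : F' σ = 0 :=
        (hσminOn.isLocalMin (Ioi_mem_nhds hσ)).hasDerivAt_eq_zero (hF σ hσ)
      rcases lt_or_gt_of_ne hne with h' | h'
      · exact key σ σstar hσ h' this hσcrit
      · exact key σstar σ hσpos h' hσcrit this
end
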